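/- arXiv:1510.06859 — 5 statements merged into one kernel-verified Lean document; each statement's English description precedes it below -/
import Mathlib

section
/- For the (λ,μ,m)-branching process with kernel K(x,A)=e^{-x}P(x+Y_λ∈A) on E=(0,∞), the n-th kernel power evaluated at the whole space satisfies Kⁿ(x,E) = λ^{n-1} e^{-nx}/((λ+n-1)(λ+n-2)⋯(λ+1)) = λⁿ e^{-nx} Γ(λ)/Γ(λ+n) for all n≥1 and x>0. -/
open MeasureTheory ProbabilityTheory Real

lemma expMeasure_eq (r : ℝ) :
    expMeasure r = MeasureTheory.volume.withDensity (exponentialPDF r) := rfl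

lemma measurable_expPDF (r : ℝ) : Measurable (exponentialPDF r) :=
  (measurable_exponentialPDFReal r).ennreal_ofReal

lemma lintegral_exp_tilt {lam t : ℝ} (hlam : 0 < lam) (ht : 0 < t) :
    ∫⁻ u, ENNReal.ofReal (Real.exp (-t * u)) ∂(expMeasure lam)
      = ENNReal.ofReal (lam / (lam + t)) := by
  rw [expMeasure_eq, lintegral_withDensity_eq_lintegral_mul _ (measurable_expPDF lam)
    (by fun_prop)]
  have key : ∀ u : ℝ, exponentialPDF lam u * ENNReal.ofReal (Real.exp (-t * u))
      = ENNReal.ofReal (lam / (lam + t)) * exponentialPDF (lam + t) u := by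
    intro u
    rcases le_or_gt 0 u with hu | hu
    · rw [exponentialPDF_of_nonneg hu, exponentialPDF_of_nonneg hu,
        ← ENNReal.ofReal_mul (by positivity), ← ENNReal.ofReal_mul (by positivity)]
      have hexp : rexp (-((lam + t) * u)) = rexp (-(lam * u)) * rexp (-t * u) := by
        rw [← Real.exp_add]; ring_nf
      rw [hexp]
      have hlt : lam + t ≠ 0 := by positivity
      field_simp
    · rw [exponentialPDF_of_neg hu, exponentialPDF_of_neg hu, zero_mul, mul_zero]
  simp only [Pi.mul_apply, key]
  rw [lintegral_const_mul _ (measurable_expPDF (lam + t)),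
    lintegral_exponentialPDF_eq_one (by positivity)]
  simp

lemma ae_nonneg_expMeasure {lam : ℝ} : ∀ᵐ u ∂(expMeasure lam), 0 ≤ u := by
  rw [ae_iff]
  have : {u : ℝ | ¬ 0 ≤ u} = Set.Iio 0 := by ext u; simp
  rw [this, expMeasure_eq, withDensity_apply _ measurableSet_Iio]
  rw [setLIntegral_congr_fun measurableSet_Iio
    (fun u hu => exponentialPDF_of_neg hu)]
  simp

theorem stmt_4 (lam : ℝ) (hlam : 0 < lam)
    (κ : ℕ → ℝ → Measure ℝ)
    (hK1 : ∀ x : ℝ, κ 1 x = ENNReal.ofReal (Real.exp (-x)) •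
        (Measure.map (fun y => x + y) (expMeasure lam)))
    (hmeas : ∀ n (A : Set ℝ), MeasurableSet A → Measurable (fun y => κ n y A))
    (hrec : ∀ (n : ℕ), 1 ≤ n → ∀ (x : ℝ) (A : Set ℝ), MeasurableSet A →
        κ (n + 1) x A = ∫⁻ y, κ n y A ∂(κ 1 x)) :
    ∀ (n : ℕ), 1 ≤ n → ∀ x : ℝ, 0 < x →
      κ n x Set.univ = ENNReal.ofReal (lam ^ n * Real.exp (-(n : ℝ) * x) * Gamma lam / Gamma (lam + n)) := by
  have hprob : IsProbabilityMeasure (expMeasure lam) := isProbabilityMeasure_expMeasure hlam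
  intro n hn
  induction n, hn using Nat.le_induction with
  | base =>
    intro x hx
    rw [hK1]
    have hmap : (Measure.map (fun y => x + y) (expMeasure lam)) Set.univ = 1 := by
      rw [Measure.map_apply (measurable_const_add x) MeasurableSet.univ]
      simp
    simp only [Measure.smul_apply, hmap, smul_eq_mul, mul_one]
    congr 1
    have hG : Gamma lam ≠ 0 := ne_of_gt (Real.Gamma_pos_of_pos hlam)
    rw [pow_one, Nat.cast_one, neg_one_mul, Real.Gamma_add_one hlam.ne']
    field_simp
  | succ n hn ih =>
    intro x hx
    have hG : Gamma lam ≠ 0 := ne_of_gt (Real.Gamma_pos_of_pos hlam)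
    have hGn : Gamma (lam + n) ≠ 0 := ne_of_gt (Real.Gamma_pos_of_pos (by positivity))
    have hnpos : (0 : ℝ) < n := by exact_mod_cast (lt_of_lt_of_le Nat.zero_lt_one hn)
    rw [hrec n hn x Set.univ MeasurableSet.univ, hK1, lintegral_smul_measure,
      lintegral_map (hmeas n Set.univ MeasurableSet.univ) (measurable_const_add x)]
    have hcong : ∫⁻ u, κ n (x + u) Set.univ ∂(expMeasure lam)
        = ∫⁻ u, ENNReal.ofReal (lam ^ n * Real.exp (-(n : ℝ) * x) * Gamma lam / Gamma (lam + n))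
            * ENNReal.ofReal (Real.exp (-(n : ℝ) * u)) ∂(expMeasure lam) := by
      refine lintegral_congr_ae ?_
      filter_upwards [ae_nonneg_expMeasure (lam := lam)] with u hu
      rw [ih (x + u) (by linarith)]
      rw [← ENNReal.ofReal_mul (by positivity)]
      congr 1
      rw [mul_add, Real.exp_add]
      ring
    rw [hcong, lintegral_const_mul _ (by fun_prop : Measurable fun u : ℝ => ENNReal.ofReal (rexp (-(n:ℝ) * u))),
      lintegral_exp_tilt hlam hnpos, ← ENNReal.ofReal_mul (by positivity), smul_eq_mul,
      ← ENNReal.ofReal_mul (by positivity)]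
    congr 1
    have hGrec : Gamma (lam + (n + 1 : ℕ)) = (lam + n) * Gamma (lam + n) := by
      push_cast
      rw [← Real.Gamma_add_one (by positivity : lam + (n:ℝ) ≠ 0)]
      ring_nf
    rw [hGrec]
    push_cast
    have hexp : rexp (-((n:ℝ) + 1) * x) = rexp (-x) * rexp (-(n:ℝ) * x) := by
      rw [← Real.exp_add]; ring_nf
    rw [hexp]
    have hlamn : lam + (n:ℝ) ≠ 0 := by positivity
    field_simp
    ring
end

section
/- With the setup M(x,A)=K(x,A)+K(x,E)mγ(A), define the generating functions M^{(s)}(x,A)=∑_{n≥0}sⁿMⁿ(x,A), K^{(s)}(x,A)=∑_{n≥0}sⁿKⁿ(x,A), and f(s)=∑_{n≥1}sⁿ∫Kⁿ(x,E)γ(dx). If s>0 is such that mf(s)<1 and K^{(s)}(x,E)<∞, then M^{(s)}(x,A) = K^{(s)}(x,A) + (m/(1-mf(s)))·(K^{(s)}(x,E)−1)·∫K^{(s)}(y,A)γ(dy). -/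
open MeasureTheory ENNReal

lemma aux_cauchy (u v : ℕ → ℝ≥0∞) :
    ∑' n : ℕ, ∑ j ∈ Finset.range n, u j * v (n - 1 - j) = (∑' j, u j) * ∑' k, v k := by
  have h1 : (∑' j, u j) * ∑' k, v k = ∑' n : ℕ, ∑ j ∈ Finset.range (n + 1), u j * v (n - j) := by
    rw [← ENNReal.tsum_mul_right]
    simp_rw [← ENNReal.tsum_mul_left]
    rw [← ENNReal.tsum_prod]
    rw [← Finset.HasAntidiagonal.sigmaAntidiagonalEquivProd.tsum_eq (fun p : ℕ × ℕ => u p.1 * v p.2)]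
    rw [ENNReal.tsum_sigma']
    congr 1
    ext n
    rw [← Finset.Nat.sum_antidiagonal_eq_sum_range_succ (fun k l => u k * v l)]
    rw [← Finset.tsum_subtype (Finset.HasAntidiagonal.antidiagonal n) (fun p : ℕ × ℕ => u p.1 * v p.2)]
    rfl
  rw [h1]
  rw [tsum_eq_zero_add' (f := fun n : ℕ => ∑ j ∈ Finset.range n, u j * v (n - 1 - j))
    ENNReal.summable]
  simp

lemma aux_partial (u v : ℕ → ℝ≥0∞) (N : ℕ) :
    ∑ n ∈ Finset.range (N + 1), ∑ j ∈ Finset.range n, u j * v (n - 1 - j)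
      ≤ (∑' j, u j) * ∑ k ∈ Finset.range N, v k := by
  rw [Finset.sum_range_succ']
  simp only [Finset.range_zero, Finset.sum_empty, add_zero]
  have h1 : ∀ t : ℕ, ∑ j ∈ Finset.range (t + 1), u j * v (t + 1 - 1 - j)
      = ∑ p ∈ Finset.HasAntidiagonal.antidiagonal t, u p.1 * v p.2 := by
    intro t
    simp only [Nat.add_sub_cancel]
    exact (Finset.Nat.sum_antidiagonal_eq_sum_range_succ (fun k l => u k * v l) t).symm
  simp only [h1]
  have hdisj : (↑(Finset.range N) : Set ℕ).PairwiseDisjoint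
      (fun t => (Finset.HasAntidiagonal.antidiagonal t : Finset (ℕ × ℕ))) := by
    intro a _ b _ hab
    simp only [Finset.disjoint_left]
    intro p hpa hpb
    rw [Finset.HasAntidiagonal.mem_antidiagonal] at hpa hpb
    exact hab (hpa ▸ hpb.symm ▸ rfl)
  rw [← Finset.sum_biUnion hdisj]
  calc ∑ p ∈ (Finset.range N).biUnion (fun t => Finset.HasAntidiagonal.antidiagonal t), u p.1 * v p.2
      ≤ ∑ p ∈ Finset.range N ×ˢ Finset.range N, u p.1 * v p.2 := by
        apply Finset.sum_le_sum_of_subset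
        intro p hp
        rw [Finset.mem_biUnion] at hp
        obtain ⟨t, ht, hpt⟩ := hp
        rw [Finset.mem_range] at ht
        rw [Finset.HasAntidiagonal.mem_antidiagonal] at hpt
        rw [Finset.mem_product, Finset.mem_range, Finset.mem_range]
        omega
    _ = (∑ j ∈ Finset.range N, u j) * ∑ k ∈ Finset.range N, v k := by
        rw [Finset.sum_mul_sum, Finset.sum_product]
    _ ≤ (∑' j, u j) * ∑ k ∈ Finset.range N, v k := by
        gcongr
        exact ENNReal.sum_le_tsum _

theorem stmt_9 {E : Type*} [MeasurableSpace E] (K : E → Measure E) (γ : Measure E)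
    [IsProbabilityMeasure γ] (hsub : ∀ x, K x Set.univ ≤ 1)
    (m : ℝ≥0∞) (hm0 : 0 < m) (hmtop : m ≠ ⊤)
    (Mpow Kpow : ℕ → E → Measure E)
    (hM0 : ∀ x, Mpow 0 x = Measure.dirac x)
    (hK0 : ∀ x, Kpow 0 x = Measure.dirac x)
    (hMmeas : ∀ n (A : Set E), MeasurableSet A → Measurable fun x => Mpow n x A)
    (hKmeas : ∀ n (A : Set E), MeasurableSet A → Measurable fun x => Kpow n x A)
    (hMrec : ∀ (n : ℕ) (x : E) (A : Set E), MeasurableSet A →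
        Mpow (n + 1) x A = ∫⁻ y, Mpow n y A ∂(K x + (m * K x Set.univ) • γ))
    (hKrec : ∀ (n : ℕ) (x : E) (A : Set E), MeasurableSet A →
        Kpow (n + 1) x A = ∫⁻ y, Kpow n y A ∂(K x))
    (f : ℝ≥0∞ → ℝ≥0∞)
    (hf : ∀ s, f s = ∑' n : ℕ, s ^ (n + 1) * ∫⁻ x, Kpow (n + 1) x Set.univ ∂γ)
    (Ms Ks : ℝ≥0∞ → E → Set E → ℝ≥0∞)
    (hMs : ∀ s x A, Ms s x A = ∑' n : ℕ, s ^ n * Mpow n x A)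
    (hKs : ∀ s x A, Ks s x A = ∑' n : ℕ, s ^ n * Kpow n x A)
    (s : ℝ≥0∞) (hs : 0 < s) (hstop : s ≠ ⊤) (hfs : m * f s < 1)
    (x : E) (hx : Ks s x Set.univ ≠ ⊤) :
    ∀ A : Set E, MeasurableSet A →
      Ms s x A = Ks s x A +
        (m / (1 - m * f s)) * (Ks s x Set.univ - 1) * ∫⁻ y, Ks s y A ∂γ := by
  -- step 1 : K powers are substochastic
  have hKub : ∀ n (x' : E), Kpow n x' Set.univ ≤ 1 := by
    intro n
    induction n with
    | zero => intro x'; rw [hK0]; simp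
    | succ n ih =>
      intro x'
      rw [hKrec n x' Set.univ MeasurableSet.univ]
      calc ∫⁻ y, Kpow n y Set.univ ∂(K x') ≤ ∫⁻ _, 1 ∂(K x') :=
            lintegral_mono (fun y => ih y)
        _ = K x' Set.univ := lintegral_one
        _ ≤ 1 := hsub x'
  -- step 2 : bound on M powers
  have hMub : ∀ n (x' : E), Mpow n x' Set.univ ≤ (1 + m) ^ n := by
    intro n
    induction n with
    | zero => intro x'; rw [hM0]; simp
    | succ n ih =>
      intro x'
      rw [hMrec n x' Set.univ MeasurableSet.univ]
      calc ∫⁻ y, Mpow n y Set.univ ∂(K x' + (m * K x' Set.univ) • γ)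
          ≤ ∫⁻ _, (1 + m) ^ n ∂(K x' + (m * K x' Set.univ) • γ) :=
            lintegral_mono (fun y => ih y)
        _ = (1 + m) ^ n * (K x' Set.univ + m * K x' Set.univ * γ Set.univ) := by
            rw [lintegral_const, Measure.add_apply, Measure.smul_apply, smul_eq_mul]
        _ ≤ (1 + m) ^ n * (1 + m * 1 * 1) := by
            gcongr
            · exact hsub x'
            · exact hsub x'
            · exact measure_mono (Set.subset_univ _) |>.trans measure_univ.le
        _ = (1 + m) ^ (n + 1) := by rw [pow_succ]; ring_nf
  -- step 3 : pathwise decomposition of M powers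
  have hdec : ∀ (A : Set E), MeasurableSet A → ∀ n (x' : E),
      Mpow n x' A = Kpow n x' A +
        m * ∑ j ∈ Finset.range n,
          Kpow (j + 1) x' Set.univ * ∫⁻ y, Mpow (n - 1 - j) y A ∂γ := by
    intro A hA n
    induction n with
    | zero => intro x'; simp [hM0, hK0]
    | succ n ih =>
      intro x'
      have hK1 : ∀ z : E, Kpow 1 z Set.univ = K z Set.univ := by
        intro z
        rw [hKrec 0 z Set.univ MeasurableSet.univ]
        simp_rw [hK0]
        simp
      set c : ℕ → ℝ≥0∞ := fun j => ∫⁻ y, Mpow (n - 1 - j) y A ∂γ with hc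
      have measS : Measurable fun y : E =>
          m * ∑ j ∈ Finset.range n, Kpow (j + 1) y Set.univ * c j :=
        (Finset.measurable_sum _ (fun j _ =>
          (hKmeas (j + 1) Set.univ MeasurableSet.univ).mul_const (c j))).const_mul m
      rw [hMrec n x' A hA, lintegral_add_measure, lintegral_smul_measure]
      have h1 : ∫⁻ y, Mpow n y A ∂(K x')
          = Kpow (n + 1) x' A +
            m * ∑ j ∈ Finset.range n, Kpow (j + 2) x' Set.univ * c j := by
        calc ∫⁻ y, Mpow n y A ∂(K x')
            = ∫⁻ y, (Kpow n y A +
                m * ∑ j ∈ Finset.range n, Kpow (j + 1) y Set.univ * c j) ∂(K x') :=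
              lintegral_congr (fun y => ih y)
          _ = (∫⁻ y, Kpow n y A ∂(K x')) +
              ∫⁻ y, m * ∑ j ∈ Finset.range n, Kpow (j + 1) y Set.univ * c j ∂(K x') :=
              lintegral_add_left (hKmeas n A hA) _
          _ = Kpow (n + 1) x' A +
              m * ∫⁻ y, ∑ j ∈ Finset.range n, Kpow (j + 1) y Set.univ * c j ∂(K x') := by
              rw [← hKrec n x' A hA,
                lintegral_const_mul m (Finset.measurable_sum _ (fun j _ =>
                  (hKmeas (j + 1) Set.univ MeasurableSet.univ).mul_const (c j)))]
          _ = Kpow (n + 1) x' A +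
              m * ∑ j ∈ Finset.range n, Kpow (j + 2) x' Set.univ * c j := by
              congr 1
              rw [lintegral_finset_sum _ (fun j _ =>
                (hKmeas (j + 1) Set.univ MeasurableSet.univ).mul_const (c j))]
              congr 1
              apply Finset.sum_congr rfl
              intro j _
              rw [lintegral_mul_const (c j) (hKmeas (j + 1) Set.univ MeasurableSet.univ),
                ← hKrec (j + 1) x' Set.univ MeasurableSet.univ]
      rw [h1]
      have h2 : ∑ j ∈ Finset.range (n + 1),
          Kpow (j + 1) x' Set.univ * ∫⁻ y, Mpow (n + 1 - 1 - j) y A ∂γ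
          = (∑ j ∈ Finset.range n, Kpow (j + 2) x' Set.univ * c j) +
            K x' Set.univ * ∫⁻ y, Mpow n y A ∂γ := by
        rw [Finset.sum_range_succ']
        have e1 : ∀ i : ℕ, n + 1 - 1 - (i + 1) = n - 1 - i := fun i => by omega
        have e2 : n + 1 - 1 - 0 = n := by omega
        simp only [e1, e2, zero_add, hK1 x', hc]
      rw [h2]
      ring
  -- finiteness facts
  have hfstop : f s ≠ ⊤ := by
    intro h
    rw [h, ENNReal.mul_top hm0.ne'] at hfs
    exact (not_lt.mpr le_top) hfs
  have h1mf0 : 1 - m * f s ≠ 0 := by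
    rw [ne_eq, tsub_eq_zero_iff_le]
    exact not_le.mpr hfs
  have h1mftop : 1 - m * f s ≠ ⊤ := by
    exact ne_top_of_le_ne_top one_ne_top tsub_le_self
  intro A hA
  set gA := ∫⁻ y, Ks s y A ∂γ with hgA
  set GA := ∑' k : ℕ, s ^ k * ∫⁻ y, Mpow k y A ∂γ with hGA
  have measKsA : Measurable fun y => Ks s y A := by
    have h : (fun y => Ks s y A) = fun y => ∑' n : ℕ, s ^ n * Kpow n y A :=
      funext fun y => hKs s y A
    rw [h]
    exact Measurable.ennreal_tsum (fun n => (hKmeas n A hA).const_mul _)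
  have measH : Measurable fun y => ∑' j : ℕ, s ^ (j + 1) * Kpow (j + 1) y Set.univ :=
    Measurable.ennreal_tsum (fun j =>
      (hKmeas (j + 1) Set.univ MeasurableSet.univ).const_mul _)
  -- generating function identity
  have hsum : ∀ x' : E, Ms s x' A = Ks s x' A +
      m * ((∑' j : ℕ, s ^ (j + 1) * Kpow (j + 1) x' Set.univ) * GA) := by
    intro x'
    rw [hMs, hKs]
    calc ∑' n : ℕ, s ^ n * Mpow n x' A
        = ∑' n : ℕ, (s ^ n * Kpow n x' A +
            m * ∑ j ∈ Finset.range n, (s ^ (j + 1) * Kpow (j + 1) x' Set.univ) *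
              (s ^ (n - 1 - j) * ∫⁻ y, Mpow (n - 1 - j) y A ∂γ)) := by
          apply tsum_congr; intro n
          rw [hdec A hA n x', mul_add]
          congr 1
          rw [mul_left_comm, Finset.mul_sum]
          congr 1
          apply Finset.sum_congr rfl
          intro j hj
          rw [Finset.mem_range] at hj
          have hn : (j + 1) + (n - 1 - j) = n := by omega
          have hp : s ^ n = s ^ (j + 1) * s ^ (n - 1 - j) := by
            rw [← pow_add, hn]
          rw [hp]
          ring
      _ = (∑' n : ℕ, s ^ n * Kpow n x' A) +
            ∑' n : ℕ, m * ∑ j ∈ Finset.range n, (s ^ (j + 1) * Kpow (j + 1) x' Set.univ) *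
              (s ^ (n - 1 - j) * ∫⁻ y, Mpow (n - 1 - j) y A ∂γ) := ENNReal.tsum_add
      _ = (∑' n : ℕ, s ^ n * Kpow n x' A) +
            m * ((∑' j : ℕ, s ^ (j + 1) * Kpow (j + 1) x' Set.univ) * GA) := by
          rw [ENNReal.tsum_mul_left,
            aux_cauchy (fun j => s ^ (j + 1) * Kpow (j + 1) x' Set.univ)
              (fun k => s ^ k * ∫⁻ y, Mpow k y A ∂γ)]
  -- the renewal equation for GA
  have hintH : ∫⁻ y, ∑' j : ℕ, s ^ (j + 1) * Kpow (j + 1) y Set.univ ∂γ = f s := by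
    rw [lintegral_tsum (fun j =>
      ((hKmeas (j + 1) Set.univ MeasurableSet.univ).const_mul _).aemeasurable), hf]
    exact tsum_congr fun j =>
      lintegral_const_mul _ (hKmeas (j + 1) Set.univ MeasurableSet.univ)
  have hGAeq : GA = gA + (m * f s) * GA := by
    have h1 : GA = ∫⁻ y, Ms s y A ∂γ := by
      have h : (fun y => Ms s y A) = fun y => ∑' n : ℕ, s ^ n * Mpow n y A :=
        funext fun y => hMs s y A
      rw [h, lintegral_tsum (fun n => ((hMmeas n A hA).const_mul _).aemeasurable)]
      exact tsum_congr fun n => (lintegral_const_mul _ (hMmeas n A hA)).symm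
    have h2 : ∫⁻ y, Ms s y A ∂γ = gA + (m * f s) * GA := by
      calc ∫⁻ y, Ms s y A ∂γ
          = ∫⁻ y, (Ks s y A +
              m * ((∑' j : ℕ, s ^ (j + 1) * Kpow (j + 1) y Set.univ) * GA)) ∂γ :=
            lintegral_congr fun y => hsum y
        _ = gA + ∫⁻ y,
              m * ((∑' j : ℕ, s ^ (j + 1) * Kpow (j + 1) y Set.univ) * GA) ∂γ :=
            lintegral_add_left measKsA _
        _ = gA + m * ((∫⁻ y, ∑' j : ℕ, s ^ (j + 1) * Kpow (j + 1) y Set.univ ∂γ) * GA) := by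
            rw [lintegral_const_mul m (measH.mul_const GA), lintegral_mul_const GA measH]
        _ = gA + (m * f s) * GA := by rw [hintH, mul_assoc]
    exact h1.trans h2
  -- finiteness of GA
  have hMint : ∀ n, ∫⁻ y, Mpow n y Set.univ ∂γ ≤ (1 + m) ^ n := fun n =>
    (lintegral_mono fun y => hMub n y).trans
      (by rw [lintegral_const, measure_univ, mul_one])
  set B := (1 + f s) * (1 - m * f s)⁻¹ with hB
  have hBtop : B ≠ ⊤ :=
    ENNReal.mul_ne_top (ENNReal.add_ne_top.mpr ⟨one_ne_top, hfstop⟩)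
      (ENNReal.inv_ne_top.mpr h1mf0)
  set T : ℕ → ℝ≥0∞ := fun N => ∑ n ∈ Finset.range N,
    s ^ n * ∫⁻ y, Mpow n y Set.univ ∂γ with hT
  have hK0int : ∫⁻ y, Kpow 0 y Set.univ ∂γ = 1 := by
    simp [hK0]
  have hsumK : ∑' n : ℕ, s ^ n * ∫⁻ y, Kpow n y Set.univ ∂γ = 1 + f s := by
    rw [tsum_eq_zero_add' ENNReal.summable, hK0int, pow_zero, one_mul, hf]
  have hTrec : ∀ N, T (N + 1) ≤ (1 + f s) + (m * f s) * T N := by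
    intro N
    have hint : ∀ n, ∫⁻ y, Mpow n y Set.univ ∂γ
        = (∫⁻ y, Kpow n y Set.univ ∂γ) +
          m * ∑ j ∈ Finset.range n, (∫⁻ y, Kpow (j + 1) y Set.univ ∂γ) *
            ∫⁻ y, Mpow (n - 1 - j) y Set.univ ∂γ := by
      intro n
      calc ∫⁻ y, Mpow n y Set.univ ∂γ
          = ∫⁻ y, (Kpow n y Set.univ + m * ∑ j ∈ Finset.range n,
              Kpow (j + 1) y Set.univ * ∫⁻ z, Mpow (n - 1 - j) z Set.univ ∂γ) ∂γ :=
            lintegral_congr fun y => hdec Set.univ MeasurableSet.univ n y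
        _ = (∫⁻ y, Kpow n y Set.univ ∂γ) + ∫⁻ y, m * ∑ j ∈ Finset.range n,
              Kpow (j + 1) y Set.univ * ∫⁻ z, Mpow (n - 1 - j) z Set.univ ∂γ ∂γ :=
            lintegral_add_left (hKmeas n Set.univ MeasurableSet.univ) _
        _ = (∫⁻ y, Kpow n y Set.univ ∂γ) +
            m * ∑ j ∈ Finset.range n, (∫⁻ y, Kpow (j + 1) y Set.univ ∂γ) *
              ∫⁻ y, Mpow (n - 1 - j) y Set.univ ∂γ := by
            rw [lintegral_const_mul m (Finset.measurable_sum _ (fun j _ =>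
              (hKmeas (j + 1) Set.univ MeasurableSet.univ).mul_const _))]
            congr 1
            rw [lintegral_finset_sum _ (fun j _ =>
              (hKmeas (j + 1) Set.univ MeasurableSet.univ).mul_const _)]
            congr 1
            apply Finset.sum_congr rfl
            intro j _
            rw [lintegral_mul_const _ (hKmeas (j + 1) Set.univ MeasurableSet.univ)]
    calc T (N + 1)
        = ∑ n ∈ Finset.range (N + 1), (s ^ n * ∫⁻ y, Kpow n y Set.univ ∂γ +
            m * ∑ j ∈ Finset.range n,
              (s ^ (j + 1) * ∫⁻ y, Kpow (j + 1) y Set.univ ∂γ) *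
              (s ^ (n - 1 - j) * ∫⁻ y, Mpow (n - 1 - j) y Set.univ ∂γ)) := by
          rw [hT]
          apply Finset.sum_congr rfl
          intro n _
          rw [hint n, mul_add]
          congr 1
          rw [mul_left_comm, Finset.mul_sum]
          congr 1
          apply Finset.sum_congr rfl
          intro j hj
          rw [Finset.mem_range] at hj
          have hn : (j + 1) + (n - 1 - j) = n := by omega
          have hp : s ^ n = s ^ (j + 1) * s ^ (n - 1 - j) := by
            rw [← pow_add, hn]
          rw [hp]
          ring
      _ = (∑ n ∈ Finset.range (N + 1), s ^ n * ∫⁻ y, Kpow n y Set.univ ∂γ) +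
            m * ∑ n ∈ Finset.range (N + 1), ∑ j ∈ Finset.range n,
              (s ^ (j + 1) * ∫⁻ y, Kpow (j + 1) y Set.univ ∂γ) *
              (s ^ (n - 1 - j) * ∫⁻ y, Mpow (n - 1 - j) y Set.univ ∂γ) := by
          rw [Finset.sum_add_distrib, ← Finset.mul_sum]
      _ ≤ (1 + f s) + (m * f s) * T N := by
          apply add_le_add
          · exact (ENNReal.sum_le_tsum _).trans hsumK.le
          · calc m * ∑ n ∈ Finset.range (N + 1), ∑ j ∈ Finset.range n,
                  (s ^ (j + 1) * ∫⁻ y, Kpow (j + 1) y Set.univ ∂γ) *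
                  (s ^ (n - 1 - j) * ∫⁻ y, Mpow (n - 1 - j) y Set.univ ∂γ)
                ≤ m * ((∑' j : ℕ, s ^ (j + 1) * ∫⁻ y, Kpow (j + 1) y Set.univ ∂γ) *
                    ∑ k ∈ Finset.range N, s ^ k * ∫⁻ y, Mpow k y Set.univ ∂γ) :=
                  mul_le_mul_right
                    (aux_partial (fun j => s ^ (j + 1) * ∫⁻ y, Kpow (j + 1) y Set.univ ∂γ)
                      (fun k => s ^ k * ∫⁻ y, Mpow k y Set.univ ∂γ) N) m
              _ = (m * f s) * T N := by rw [← hf, hT, mul_assoc]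
  have hTB : ∀ N, T N ≤ B := by
    intro N
    induction N with
    | zero => simp [hT]
    | succ N ih =>
      refine (hTrec N).trans ?_
      have step : (1 + f s) + (m * f s) * B = B := by
        have hcc : (1 - m * f s) * (1 - m * f s)⁻¹ = 1 :=
          ENNReal.mul_inv_cancel h1mf0 h1mftop
        have hadd : (1 - m * f s) + m * f s = 1 := tsub_add_cancel_of_le hfs.le
        calc (1 + f s) + (m * f s) * B
            = (1 + f s) * ((1 - m * f s) * (1 - m * f s)⁻¹) +
              (m * f s) * ((1 + f s) * (1 - m * f s)⁻¹) := by rw [hcc, mul_one, hB]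
          _ = ((1 + f s) * ((1 - m * f s) + m * f s)) * (1 - m * f s)⁻¹ := by ring
          _ = B := by rw [hadd, mul_one, hB]
      calc (1 + f s) + (m * f s) * T N ≤ (1 + f s) + (m * f s) * B := by gcongr
        _ = B := step
  have hGU : ∑' k : ℕ, s ^ k * ∫⁻ y, Mpow k y Set.univ ∂γ ≤ B := by
    rw [ENNReal.tsum_eq_iSup_sum]
    apply iSup_le
    intro F
    obtain ⟨N, hN⟩ := F.exists_nat_subset_range
    exact (Finset.sum_le_sum_of_subset hN).trans (hTB N)
  have hGAtop : GA ≠ ⊤ := by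
    have hle : GA ≤ ∑' k : ℕ, s ^ k * ∫⁻ y, Mpow k y Set.univ ∂γ := by
      apply ENNReal.tsum_le_tsum
      intro k
      exact mul_le_mul_right (lintegral_mono fun y =>
        measure_mono (Set.subset_univ A)) _
    exact ((hle.trans hGU).trans_lt hBtop.lt_top).ne
  -- solve for GA
  have hmfGA : (m * f s) * GA ≠ ⊤ :=
    ENNReal.mul_ne_top (ENNReal.mul_ne_top hmtop hfstop) hGAtop
  have hc1 : (1 - m * f s) * GA = gA := by
    rw [ENNReal.sub_mul (fun _ _ => hGAtop), one_mul]
    nth_rewrite 1 [hGAeq]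
    rw [ENNReal.add_sub_cancel_right hmfGA]
  have hGAval : GA = (1 - m * f s)⁻¹ * gA := by
    rw [← hc1, ← mul_assoc, ENNReal.inv_mul_cancel h1mf0 h1mftop, one_mul]
  -- identify the tsum at x with Ks s x univ - 1
  have hHx : (∑' j : ℕ, s ^ (j + 1) * Kpow (j + 1) x Set.univ) = Ks s x Set.univ - 1 := by
    have h1 : Ks s x Set.univ = 1 + ∑' j : ℕ, s ^ (j + 1) * Kpow (j + 1) x Set.univ := by
      rw [hKs, tsum_eq_zero_add' ENNReal.summable]
      congr 1
      rw [hK0]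
      simp
    rw [h1, ENNReal.add_sub_cancel_left one_ne_top]
  -- conclude
  rw [hsum x, hHx, hGAval, ENNReal.div_eq_inv_mul]
  ring
end

section
/- With f(s)=∑_{n≥1}dₙsⁿ where dₙ=∫Kⁿ(x,E)γ(dx), and M^{(s)}, K^{(s)} as above: for any s>0 with mf(s)<1 and any A∈𝓔, ∫M^{(s)}(x,A)γ(dx) = (∫K^{(s)}(x,A)γ(dx))/(1−mf(s)) < ∞; and if mf(s)≥1 then ∫M^{(s)}(x,E)γ(dx) = ∞. -/
open MeasureTheory ENNReal

lemma tsum_shift_aux (h : ℕ → ℝ≥0∞) (j : ℕ) :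
    (∑' n : ℕ, if j < n then h (n - 1 - j) else 0) = ∑' k : ℕ, h k := by
  have hinj : Function.Injective (fun k : ℕ => j + 1 + k) := add_right_injective (j + 1)
  have hsupp : Function.support (fun n : ℕ => if j < n then h (n - 1 - j) else 0)
      ⊆ Set.range (fun k : ℕ => j + 1 + k) := by
    intro n hn
    by_cases hjn : j < n
    · exact ⟨n - 1 - j, by show j + 1 + (n - 1 - j) = n; omega⟩
    · simp [Function.mem_support, hjn] at hn
  have := hinj.tsum_eq (f := fun n : ℕ => if j < n then h (n - 1 - j) else 0) hsupp
  rw [← this]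
  refine tsum_congr fun k => ?_
  show (if j < j + 1 + k then h (j + 1 + k - 1 - j) else 0) = h k
  rw [if_pos (by omega)]
  congr 1
  omega

lemma cauchy_aux (g h : ℕ → ℝ≥0∞) :
    (∑' n : ℕ, ∑ j ∈ Finset.range n, g j * h (n - 1 - j))
      = (∑' n : ℕ, g n) * ∑' n : ℕ, h n := by
  have step1 : ∀ n : ℕ, (∑ j ∈ Finset.range n, g j * h (n - 1 - j))
      = ∑' j : ℕ, if j < n then g j * h (n - 1 - j) else 0 := by
    intro n
    rw [tsum_eq_sum (s := Finset.range n) (fun b hb => if_neg (by simpa using hb))]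
    exact Finset.sum_congr rfl fun j hj => (if_pos (Finset.mem_range.mp hj)).symm
  calc (∑' n : ℕ, ∑ j ∈ Finset.range n, g j * h (n - 1 - j))
      = ∑' n : ℕ, ∑' j : ℕ, if j < n then g j * h (n - 1 - j) else 0 := tsum_congr step1
    _ = ∑' j : ℕ, ∑' n : ℕ, if j < n then g j * h (n - 1 - j) else 0 := ENNReal.tsum_comm
    _ = ∑' j : ℕ, g j * ∑' n : ℕ, if j < n then h (n - 1 - j) else 0 := by
        refine tsum_congr fun j => ?_
        rw [← ENNReal.tsum_mul_left]
        exact tsum_congr fun n => by split <;> simp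
    _ = ∑' j : ℕ, g j * ∑' k : ℕ, h k := by
        refine tsum_congr fun j => ?_
        rw [tsum_shift_aux]
    _ = (∑' n : ℕ, g n) * ∑' n : ℕ, h n := ENNReal.tsum_mul_right

lemma cauchy_fin_aux (g h : ℕ → ℝ≥0∞) (N : ℕ) :
    (∑ n ∈ Finset.range N, ∑ j ∈ Finset.range n, g j * h (n - 1 - j))
      ≤ (∑' n : ℕ, g n) * ∑ k ∈ Finset.range N, h k := by
  have step1 : ∀ n ∈ Finset.range N, (∑ j ∈ Finset.range n, g j * h (n - 1 - j))
      = ∑ j ∈ Finset.range N, if j < n then g j * h (n - 1 - j) else 0 := by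
    intro n hn
    calc (∑ j ∈ Finset.range n, g j * h (n - 1 - j))
        = ∑ j ∈ Finset.range n, (if j < n then g j * h (n - 1 - j) else 0) :=
          Finset.sum_congr rfl fun j hj => (if_pos (Finset.mem_range.mp hj)).symm
      _ = ∑ j ∈ Finset.range N, (if j < n then g j * h (n - 1 - j) else 0) :=
          Finset.sum_subset (Finset.range_subset_range.2 (Finset.mem_range.mp hn).le)
            (fun x _ hx => if_neg (by simp at hx ⊢; omega))
  rw [Finset.sum_congr rfl step1, Finset.sum_comm]
  have step2 : ∀ j ∈ Finset.range N,
      (∑ n ∈ Finset.range N, if j < n then g j * h (n - 1 - j) else 0)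
        ≤ g j * ∑ k ∈ Finset.range N, h k := by
    intro j _
    have : (∑ n ∈ Finset.range N, if j < n then g j * h (n - 1 - j) else 0)
        = g j * ∑ n ∈ Finset.range N, if j < n then h (n - 1 - j) else 0 := by
      rw [Finset.mul_sum]
      exact Finset.sum_congr rfl fun n _ => by split <;> simp
    rw [this]
    refine mul_le_mul_right ?_ _
    rw [← Finset.sum_filter]
    have hfil : (Finset.range N).filter (fun n => j < n) = Finset.Ico (j+1) N := by
      ext n; simp [Finset.mem_filter, Finset.mem_Ico, Finset.mem_range]; omega
    rw [hfil, Finset.sum_Ico_eq_sum_range]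
    have : ∀ i, h (j + 1 + i - 1 - j) = h i := fun i => by congr 1; omega
    calc (∑ i ∈ Finset.range (N - (j+1)), h (j + 1 + i - 1 - j))
        = ∑ i ∈ Finset.range (N - (j+1)), h i := Finset.sum_congr rfl fun i _ => this i
      _ ≤ ∑ k ∈ Finset.range N, h k :=
          Finset.sum_le_sum_of_subset (Finset.range_subset_range.2 (by omega))
  calc (∑ j ∈ Finset.range N, ∑ n ∈ Finset.range N, if j < n then g j * h (n - 1 - j) else 0)
      ≤ ∑ j ∈ Finset.range N, g j * ∑ k ∈ Finset.range N, h k := Finset.sum_le_sum step2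
    _ = (∑ j ∈ Finset.range N, g j) * ∑ k ∈ Finset.range N, h k := by rw [Finset.sum_mul]
    _ ≤ (∑' n : ℕ, g n) * ∑ k ∈ Finset.range N, h k :=
        mul_le_mul_left (ENNReal.sum_le_tsum _) _
theorem stmt_10 {E : Type*} [MeasurableSpace E] (K : E → Measure E) (γ : Measure E)
    [IsProbabilityMeasure γ] (hsub : ∀ x, K x Set.univ ≤ 1)
    (m : ℝ≥0∞) (hm0 : 0 < m) (hmtop : m ≠ ⊤)
    (Mpow Kpow : ℕ → E → Measure E)
    (hM0 : ∀ x, Mpow 0 x = Measure.dirac x)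
    (hK0 : ∀ x, Kpow 0 x = Measure.dirac x)
    (hMmeas : ∀ n (A : Set E), MeasurableSet A → Measurable fun x => Mpow n x A)
    (hKmeas : ∀ n (A : Set E), MeasurableSet A → Measurable fun x => Kpow n x A)
    (hMrec : ∀ (n : ℕ) (x : E) (A : Set E), MeasurableSet A →
        Mpow (n + 1) x A = ∫⁻ y, Mpow n y A ∂(K x + (m * K x Set.univ) • γ))
    (hKrec : ∀ (n : ℕ) (x : E) (A : Set E), MeasurableSet A →
        Kpow (n + 1) x A = ∫⁻ y, Kpow n y A ∂(K x))
    (f : ℝ≥0∞ → ℝ≥0∞)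
    (hf : ∀ s, f s = ∑' n : ℕ, s ^ (n + 1) * ∫⁻ x, Kpow (n + 1) x Set.univ ∂γ)
    (Ms Ks : ℝ≥0∞ → E → Set E → ℝ≥0∞)
    (hMs : ∀ s x A, Ms s x A = ∑' n : ℕ, s ^ n * Mpow n x A)
    (hKs : ∀ s x A, Ks s x A = ∑' n : ℕ, s ^ n * Kpow n x A)
    (s : ℝ≥0∞) (hs : 0 < s) (hstop : s ≠ ⊤) :
    (m * f s < 1 → ∀ A : Set E, MeasurableSet A →
      ∫⁻ x, Ms s x A ∂γ = (∫⁻ x, Ks s x A ∂γ) / (1 - m * f s) ∧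
      (∫⁻ x, Ms s x A ∂γ) < ⊤) ∧
    (1 ≤ m * f s → ∫⁻ x, Ms s x Set.univ ∂γ = ⊤) := by
  set c : ℝ≥0∞ := m * f s with hc
  -- d n = ∫ Kpow n x univ dγ
  set d : ℕ → ℝ≥0∞ := fun n => ∫⁻ x, Kpow n x Set.univ ∂γ with hd
  have h1mtop : (1 : ℝ≥0∞) + m ≠ ⊤ := by
    simp [ENNReal.add_eq_top, hmtop]
  -- the key lemma, for each measurable A
  have key : ∀ A : Set E, MeasurableSet A →
      (∫⁻ x, Ms s x A ∂γ) = (∫⁻ x, Ks s x A ∂γ) + c * (∫⁻ x, Ms s x A ∂γ) ∧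
      (∫⁻ x, Ks s x A ∂γ) ≤ 1 + f s ∧
      (c < 1 → (∫⁻ x, Ms s x A ∂γ) < ⊤) := by
    intro A hA
    set u : ℕ → ℝ≥0∞ := fun n => ∫⁻ x, Mpow n x A ∂γ with hu
    set b : ℕ → ℝ≥0∞ := fun n => ∫⁻ x, Kpow n x A ∂γ with hb
    -- pointwise bound on Mpow
    have hMA : ∀ n x, Mpow n x A ≤ (1 + m) ^ n := by
      intro n
      induction n with
      | zero =>
        intro x
        rw [hM0 x, pow_zero]
        exact (measure_mono (Set.subset_univ A)).trans_eq (by simp)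
      | succ n ih =>
        intro x
        rw [hMrec n x A hA, lintegral_add_measure, lintegral_smul_measure]
        have e1 : (∫⁻ y, Mpow n y A ∂(K x)) ≤ (1 + m) ^ n := by
          calc (∫⁻ y, Mpow n y A ∂(K x)) ≤ ∫⁻ _, (1 + m) ^ n ∂(K x) :=
                lintegral_mono fun y => ih y
            _ = (1 + m) ^ n * K x Set.univ := lintegral_const _
            _ ≤ (1 + m) ^ n * 1 := mul_le_mul_right (hsub x) _
            _ = (1 + m) ^ n := mul_one _
        have e2 : (∫⁻ y, Mpow n y A ∂γ) ≤ (1 + m) ^ n := by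
          calc (∫⁻ y, Mpow n y A ∂γ) ≤ ∫⁻ _, (1 + m) ^ n ∂γ := lintegral_mono fun y => ih y
            _ = (1 + m) ^ n := by simp
        calc (∫⁻ y, Mpow n y A ∂(K x)) + m * K x Set.univ * ∫⁻ y, Mpow n y A ∂γ
            ≤ (1 + m) ^ n + m * 1 * (1 + m) ^ n := by
              gcongr
              exact hsub x
          _ = (1 + m) ^ n * (1 + m) := by ring
          _ = (1 + m) ^ (n + 1) := (pow_succ _ _).symm
    have hun : ∀ n, u n ≤ (1 + m) ^ n := by
      intro n
      calc u n ≤ ∫⁻ _, (1 + m) ^ n ∂γ := lintegral_mono fun x => hMA n x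
        _ = (1 + m) ^ n := by simp
    have huntop : ∀ n, u n ≠ ⊤ :=
      fun n => ((hun n).trans_lt (ENNReal.pow_lt_top h1mtop.lt_top)).ne
    -- Kpow 1 of univ
    have hK1 : ∀ x, Kpow 1 x Set.univ = K x Set.univ := by
      intro x
      rw [hKrec 0 x _ MeasurableSet.univ]
      calc (∫⁻ y, Kpow 0 y Set.univ ∂(K x)) = ∫⁻ _, 1 ∂(K x) :=
            lintegral_congr fun y => by rw [hK0 y]; simp
        _ = K x Set.univ := by simp
    -- pointwise renewal expansion
    have hexp : ∀ n x, Mpow n x A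
        = Kpow n x A + ∑ j ∈ Finset.range n, m * Kpow (j + 1) x Set.univ * u (n - 1 - j) := by
      intro n
      induction n with
      | zero => intro x; simp [hM0 x, hK0 x]
      | succ n ih =>
        intro x
        have hmeasg : ∀ j : ℕ, Measurable fun y => m * Kpow (j + 1) y Set.univ * u (n - 1 - j) :=
          fun j => ((hKmeas (j + 1) _ MeasurableSet.univ).const_mul m).mul_const _
        have h1 : (∫⁻ y, Mpow n y A ∂(K x))
            = Kpow (n + 1) x A
              + ∑ j ∈ Finset.range n, m * Kpow (j + 2) x Set.univ * u (n - 1 - j) := by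
          calc (∫⁻ y, Mpow n y A ∂(K x))
              = ∫⁻ y, (Kpow n y A
                  + ∑ j ∈ Finset.range n, m * Kpow (j + 1) y Set.univ * u (n - 1 - j)) ∂(K x) :=
                lintegral_congr fun y => ih y
            _ = (∫⁻ y, Kpow n y A ∂(K x))
                + ∑ j ∈ Finset.range n,
                    ∫⁻ y, m * Kpow (j + 1) y Set.univ * u (n - 1 - j) ∂(K x) := by
                rw [lintegral_add_left (hKmeas n A hA)]
                congr 1
                exact lintegral_finset_sum _ (fun j _ => hmeasg j)
            _ = Kpow (n + 1) x A
                + ∑ j ∈ Finset.range n, m * Kpow (j + 2) x Set.univ * u (n - 1 - j) := by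
                rw [← hKrec n x A hA]
                congr 1
                refine Finset.sum_congr rfl fun j hj => ?_
                rw [lintegral_mul_const _ ((hKmeas (j + 1) _ MeasurableSet.univ).const_mul m),
                  lintegral_const_mul m (hKmeas (j + 1) _ MeasurableSet.univ),
                  ← hKrec (j + 1) x _ MeasurableSet.univ]
        calc Mpow (n + 1) x A
            = (∫⁻ y, Mpow n y A ∂(K x)) + m * K x Set.univ * u n := by
              rw [hMrec n x A hA, lintegral_add_measure, lintegral_smul_measure, smul_eq_mul]
          _ = Kpow (n + 1) x A
              + ((∑ j ∈ Finset.range n, m * Kpow (j + 2) x Set.univ * u (n - 1 - j))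
                + m * Kpow 1 x Set.univ * u n) := by
              rw [h1, hK1 x, add_assoc]
          _ = Kpow (n + 1) x A
              + ∑ j ∈ Finset.range (n + 1), m * Kpow (j + 1) x Set.univ * u (n + 1 - 1 - j) := by
              congr 1
              rw [Finset.sum_range_succ']
              congr 1
              refine Finset.sum_congr rfl fun j hj => ?_
              have hidx : n + 1 - 1 - (j + 1) = n - 1 - j := by omega
              rw [hidx]
    -- integrated renewal equation
    have hurec : ∀ n, u n = b n + ∑ j ∈ Finset.range n, m * d (j + 1) * u (n - 1 - j) := by
      intro n
      have hmeasg : ∀ j : ℕ, Measurable fun y => m * Kpow (j + 1) y Set.univ * u (n - 1 - j) :=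
        fun j => ((hKmeas (j + 1) _ MeasurableSet.univ).const_mul m).mul_const _
      calc u n = ∫⁻ x, (Kpow n x A
            + ∑ j ∈ Finset.range n, m * Kpow (j + 1) x Set.univ * u (n - 1 - j)) ∂γ :=
            lintegral_congr fun x => hexp n x
        _ = b n + ∑ j ∈ Finset.range n,
              ∫⁻ x, m * Kpow (j + 1) x Set.univ * u (n - 1 - j) ∂γ := by
            rw [lintegral_add_left (hKmeas n A hA)]
            congr 1
            exact lintegral_finset_sum _ (fun j _ => hmeasg j)
        _ = b n + ∑ j ∈ Finset.range n, m * d (j + 1) * u (n - 1 - j) := by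
            congr 1
            refine Finset.sum_congr rfl fun j hj => ?_
            rw [lintegral_mul_const _ ((hKmeas (j + 1) _ MeasurableSet.univ).const_mul m),
              lintegral_const_mul m (hKmeas (j + 1) _ MeasurableSet.univ)]
    -- tsum representations
    have hU : (∫⁻ x, Ms s x A ∂γ) = ∑' n : ℕ, s ^ n * u n := by
      simp only [hMs]
      rw [lintegral_tsum fun n => ((hMmeas n A hA).const_mul _).aemeasurable]
      exact tsum_congr fun n => lintegral_const_mul _ (hMmeas n A hA)
    have hB : (∫⁻ x, Ks s x A ∂γ) = ∑' n : ℕ, s ^ n * b n := by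
      simp only [hKs]
      rw [lintegral_tsum fun n => ((hKmeas n A hA).const_mul _).aemeasurable]
      exact tsum_congr fun n => lintegral_const_mul _ (hKmeas n A hA)
    have hfd : c = ∑' j : ℕ, m * (s ^ (j + 1) * d (j + 1)) := by
      rw [hc, hf s, ENNReal.tsum_mul_left]
    -- split each term
    have hsplit : ∀ n : ℕ, s ^ n * u n = s ^ n * b n
        + ∑ j ∈ Finset.range n,
            (m * (s ^ (j + 1) * d (j + 1))) * (s ^ (n - 1 - j) * u (n - 1 - j)) := by
      intro n
      rw [hurec n, mul_add, Finset.mul_sum]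
      congr 1
      refine Finset.sum_congr rfl fun j hj => ?_
      have hjn : (j + 1) + (n - 1 - j) = n := by
        have := Finset.mem_range.mp hj; omega
      calc s ^ n * (m * d (j + 1) * u (n - 1 - j))
          = (s ^ (j + 1) * s ^ (n - 1 - j)) * (m * d (j + 1) * u (n - 1 - j)) := by
            rw [← pow_add, hjn]
        _ = (m * (s ^ (j + 1) * d (j + 1))) * (s ^ (n - 1 - j) * u (n - 1 - j)) := by ring
    -- the renewal equation for generating functions
    have heq : (∑' n : ℕ, s ^ n * u n)
        = (∑' n : ℕ, s ^ n * b n) + c * ∑' n : ℕ, s ^ n * u n := by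
      calc (∑' n : ℕ, s ^ n * u n)
          = ∑' n : ℕ, (s ^ n * b n
            + ∑ j ∈ Finset.range n,
                (m * (s ^ (j + 1) * d (j + 1))) * (s ^ (n - 1 - j) * u (n - 1 - j))) :=
            tsum_congr hsplit
        _ = (∑' n : ℕ, s ^ n * b n)
            + ∑' n : ℕ, ∑ j ∈ Finset.range n,
                (m * (s ^ (j + 1) * d (j + 1))) * (s ^ (n - 1 - j) * u (n - 1 - j)) :=
            ENNReal.tsum_add
        _ = (∑' n : ℕ, s ^ n * b n) + c * ∑' n : ℕ, s ^ n * u n := by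
            rw [cauchy_aux (fun j => m * (s ^ (j + 1) * d (j + 1))) (fun k => s ^ k * u k), ← hfd]
    have hBle : (∫⁻ x, Ks s x A ∂γ) ≤ 1 + f s := by
      rw [hB, tsum_eq_zero_add' ENNReal.summable]
      have hb0 : s ^ 0 * b 0 ≤ 1 := by
        rw [pow_zero, one_mul, hb]
        calc (∫⁻ x, Kpow 0 x A ∂γ) ≤ ∫⁻ _, 1 ∂γ := by
              refine lintegral_mono fun x => ?_
              rw [hK0 x]
              exact (measure_mono (Set.subset_univ A)).trans_eq (by simp)
          _ = 1 := by simp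
      have htail : (∑' n : ℕ, s ^ (n + 1) * b (n + 1)) ≤ f s := by
        rw [hf s]
        refine ENNReal.tsum_le_tsum fun n => ?_
        refine mul_le_mul_right ?_ _
        exact lintegral_mono fun x => measure_mono (Set.subset_univ A)
      exact add_le_add hb0 htail
    refine ⟨by rw [hU, hB]; exact heq, hBle, ?_⟩
    · -- finiteness when c < 1
      intro hclt
      have hc1 : (1 : ℝ≥0∞) - c ≠ 0 := by
        simp only [ne_eq, tsub_eq_zero_iff_le, not_le]
        exact hclt
      have hftop : f s ≠ ⊤ := by
        intro hft
        rw [hc, hft, ENNReal.mul_top hm0.ne'] at hclt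
        exact not_top_lt hclt
      have hBtop : (∑' n : ℕ, s ^ n * b n) ≠ ⊤ := by
        rw [← hB]
        exact (hBle.trans_lt (ENNReal.add_lt_top.mpr ⟨one_lt_top, hftop.lt_top⟩)).ne
      have hPS : ∀ N : ℕ, (∑ n ∈ Finset.range N, s ^ n * u n)
          ≤ (∑' n : ℕ, s ^ n * b n) + c * ∑ n ∈ Finset.range N, s ^ n * u n := by
        intro N
        calc (∑ n ∈ Finset.range N, s ^ n * u n)
            = ∑ n ∈ Finset.range N, (s ^ n * b n
              + ∑ j ∈ Finset.range n,
                  (m * (s ^ (j + 1) * d (j + 1))) * (s ^ (n - 1 - j) * u (n - 1 - j))) :=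
              Finset.sum_congr rfl fun n _ => hsplit n
          _ = (∑ n ∈ Finset.range N, s ^ n * b n)
              + ∑ n ∈ Finset.range N, ∑ j ∈ Finset.range n,
                  (m * (s ^ (j + 1) * d (j + 1))) * (s ^ (n - 1 - j) * u (n - 1 - j)) :=
              Finset.sum_add_distrib
          _ ≤ (∑' n : ℕ, s ^ n * b n)
              + (∑' j : ℕ, m * (s ^ (j + 1) * d (j + 1)))
                  * ∑ n ∈ Finset.range N, s ^ n * u n :=
              add_le_add (ENNReal.sum_le_tsum _)
                (cauchy_fin_aux (fun j => m * (s ^ (j + 1) * d (j + 1)))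
                  (fun k => s ^ k * u k) N)
          _ = (∑' n : ℕ, s ^ n * b n) + c * ∑ n ∈ Finset.range N, s ^ n * u n := by
              rw [← hfd]
      have hPfin : ∀ N : ℕ, (∑ n ∈ Finset.range N, s ^ n * u n) ≠ ⊤ := by
        intro N
        refine (ENNReal.sum_lt_top.mpr fun n _ => ?_).ne
        exact ENNReal.mul_lt_top (ENNReal.pow_lt_top hstop.lt_top) (huntop n).lt_top
      have hPle : ∀ N : ℕ, (∑ n ∈ Finset.range N, s ^ n * u n)
          ≤ (∑' n : ℕ, s ^ n * b n) / (1 - c) := by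
        intro N
        set P := ∑ n ∈ Finset.range N, s ^ n * u n with hP
        rw [ENNReal.le_div_iff_mul_le (Or.inl hc1) (Or.inl (by simp [ENNReal.sub_ne_top]))]
        have : P * (1 - c) = P - P * c := by
          rw [ENNReal.mul_sub fun _ _ => hPfin N, mul_one]
        rw [this]
        rw [tsub_le_iff_right]
        calc P ≤ (∑' n : ℕ, s ^ n * b n) + c * P := hPS N
          _ = (∑' n : ℕ, s ^ n * b n) + P * c := by rw [mul_comm]
      rw [hU]
      calc (∑' n : ℕ, s ^ n * u n) ≤ (∑' n : ℕ, s ^ n * b n) / (1 - c) :=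
            ENNReal.tsum_le_of_sum_range_le hPle
        _ < ⊤ := ENNReal.div_lt_top hBtop hc1
  constructor
  · intro hclt A hA
    obtain ⟨heq, hBle, hfin⟩ := key A hA
    have hUlt := hfin hclt
    refine ⟨?_, hUlt⟩
    have hc1 : (1 : ℝ≥0∞) - c ≠ 0 := by
      simp only [ne_eq, tsub_eq_zero_iff_le, not_le]
      exact hclt
    have hcUtop : c * (∫⁻ x, Ms s x A ∂γ) ≠ ⊤ :=
      (ENNReal.mul_lt_top (hclt.trans one_lt_top) hUlt).ne
    have hBeq : (∫⁻ x, Ks s x A ∂γ) = (∫⁻ x, Ms s x A ∂γ) - c * (∫⁻ x, Ms s x A ∂γ) :=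
      (ENNReal.sub_eq_of_eq_add hcUtop heq).symm
    rw [ENNReal.eq_div_iff hc1 (by simp [ENNReal.sub_ne_top]), hBeq]
    rw [mul_comm, ENNReal.mul_sub fun _ _ => hUlt.ne, mul_one, mul_comm]
  · intro hc1
    obtain ⟨heq, -, -⟩ := key Set.univ MeasurableSet.univ
    by_contra hU
    have hBge : (1 : ℝ≥0∞) ≤ ∫⁻ x, Ks s x Set.univ ∂γ := by
      calc (1 : ℝ≥0∞) = ∫⁻ _, (1 : ℝ≥0∞) ∂γ := by simp
        _ = ∫⁻ x, s ^ 0 * Kpow 0 x Set.univ ∂γ := by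
            refine (lintegral_congr fun x => ?_)
            rw [hK0 x, pow_zero, one_mul]
            simp
        _ ≤ ∫⁻ x, Ks s x Set.univ ∂γ := by
            refine lintegral_mono fun x => ?_
            rw [hKs]
            exact ENNReal.le_tsum 0
    have hge : 1 + (∫⁻ x, Ms s x Set.univ ∂γ) ≤ ∫⁻ x, Ms s x Set.univ ∂γ := by
      calc 1 + (∫⁻ x, Ms s x Set.univ ∂γ)
          ≤ (∫⁻ x, Ks s x Set.univ ∂γ) + c * (∫⁻ x, Ms s x Set.univ ∂γ) := by
            refine add_le_add hBge ?_
            calc (∫⁻ x, Ms s x Set.univ ∂γ) = 1 * ∫⁻ x, Ms s x Set.univ ∂γ := (one_mul _).symm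
              _ ≤ c * ∫⁻ x, Ms s x Set.univ ∂γ := mul_le_mul_left hc1 _
        _ = ∫⁻ x, Ms s x Set.univ ∂γ := heq.symm
    exact lt_irrefl _ (lt_of_lt_of_le (ENNReal.lt_add_right hU one_ne_zero)
      (by rw [add_comm]; exact hge))
end

section
/- Under m·f(R)=1, the function u(x)=(1+m)(K^{(R)}(x,E)−1) is a right eigenfunction of M at eigenvalue ρ=1/R: for every x∈E with K^{(R)}(x,E)<∞, ∫u(y)M(x,dy) = ρ·u(x), where M(x,A)=K(x,A)+K(x,E)mγ(A). -/
set_option maxHeartbeats 1000000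

open MeasureTheory ENNReal

theorem stmt_14 {E : Type*} [MeasurableSpace E] (K : E → Measure E) (γ : Measure E)
    [IsProbabilityMeasure γ] (hsub : ∀ x, K x Set.univ ≤ 1)
    (m : ℝ≥0∞) (hm0 : 0 < m) (hmtop : m ≠ ⊤)
    (Mpow Kpow : ℕ → E → Measure E)
    (hM0 : ∀ x, Mpow 0 x = Measure.dirac x)
    (hK0 : ∀ x, Kpow 0 x = Measure.dirac x)
    (hMmeas : ∀ n (A : Set E), MeasurableSet A → Measurable fun x => Mpow n x A)
    (hKmeas : ∀ n (A : Set E), MeasurableSet A → Measurable fun x => Kpow n x A)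
    (hMrec : ∀ (n : ℕ) (x : E) (A : Set E), MeasurableSet A →
        Mpow (n + 1) x A = ∫⁻ y, Mpow n y A ∂(K x + (m * K x Set.univ) • γ))
    (hKrec : ∀ (n : ℕ) (x : E) (A : Set E), MeasurableSet A →
        Kpow (n + 1) x A = ∫⁻ y, Kpow n y A ∂(K x))
    (f : ℝ≥0∞ → ℝ≥0∞)
    (hf : ∀ s, f s = ∑' n : ℕ, s ^ (n + 1) * ∫⁻ x, Kpow (n + 1) x Set.univ ∂γ)
    (Ms Ks : ℝ≥0∞ → E → Set E → ℝ≥0∞)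
    (hMs : ∀ s x A, Ms s x A = ∑' n : ℕ, s ^ n * Mpow n x A)
    (hKs : ∀ s x A, Ks s x A = ∑' n : ℕ, s ^ n * Kpow n x A)
    (R : ℝ≥0∞) (hR0 : 0 < R) (hRtop : R ≠ ⊤) (hRf : m * f R = 1)
    (u : E → ℝ≥0∞) (hu : ∀ x, u x = (1 + m) * (Ks R x Set.univ - 1))
    (hae : ∀ᵐ x ∂γ, Ks R x Set.univ ≠ ⊤) :
    ∀ x : E, Ks R x Set.univ ≠ ⊤ →
      ∫⁻ y, u y ∂(K x + (m * K x Set.univ) • γ) = R⁻¹ * u x := by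
  intro x hx
  have hmK : ∀ n, Measurable fun y => Kpow n y Set.univ :=
    fun n => hKmeas n Set.univ MeasurableSet.univ
  have hK1 : Kpow 1 x Set.univ = K x Set.univ := by
    rw [hKrec 0 x Set.univ MeasurableSet.univ]
    simp [hK0]
  have hu' : ∀ y, u y = (1 + m) * ∑' n : ℕ, R ^ (n + 1) * Kpow (n + 1) y Set.univ := by
    intro y
    rw [hu, hKs, tsum_eq_zero_add' ENNReal.summable]
    simp only [pow_zero, one_mul, hK0]
    rw [Measure.dirac_apply_of_mem (Set.mem_univ y),
      ENNReal.add_sub_cancel_left one_ne_top]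
  have hint : ∀ μ : Measure E, ∫⁻ y, u y ∂μ
      = (1 + m) * ∑' n : ℕ, R ^ (n + 1) * ∫⁻ y, Kpow (n + 1) y Set.univ ∂μ := by
    intro μ
    simp only [hu']
    rw [lintegral_const_mul _ (Measurable.ennreal_tsum fun n =>
      ((hmK (n + 1)).const_mul _)), lintegral_tsum fun n =>
      ((hmK (n + 1)).const_mul _).aemeasurable]
    congr 1
    exact tsum_congr fun n => lintegral_const_mul _ (hmK (n + 1))
  have hA : ∫⁻ y, u y ∂(K x)
      = (1 + m) * ∑' n : ℕ, R ^ (n + 1) * Kpow (n + 2) x Set.univ := by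
    rw [hint]
    congr 1
    exact tsum_congr fun n => by rw [← hKrec (n + 1) x Set.univ MeasurableSet.univ]
  have hB : ∫⁻ y, u y ∂γ = (1 + m) * f R := by
    rw [hint, hf]
  have hux : u x = (1 + m) * (R * K x Set.univ
      + R * ∑' n : ℕ, R ^ (n + 1) * Kpow (n + 2) x Set.univ) := by
    rw [hu' x]
    congr 1
    rw [tsum_eq_zero_add' ENNReal.summable, zero_add, pow_one, hK1]
    congr 1
    rw [← ENNReal.tsum_mul_left]
    exact tsum_congr fun n => by rw [show n + 1 + 1 = n + 2 from rfl]; ring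
  rw [lintegral_add_measure, lintegral_smul_measure, hA, hB, hux]
  have hRR : R⁻¹ * R = 1 := ENNReal.inv_mul_cancel hR0.ne' hRtop
  set S2 := ∑' n : ℕ, R ^ (n + 1) * Kpow (n + 2) x Set.univ with hS2
  have h2 : m * K x Set.univ * ((1 + m) * f R) = (1 + m) * K x Set.univ := by
    calc m * K x Set.univ * ((1 + m) * f R)
        = (1 + m) * K x Set.univ * (m * f R) := by ring
      _ = (1 + m) * K x Set.univ := by rw [hRf, mul_one]
  have h3 : R⁻¹ * ((1 + m) * (R * K x Set.univ + R * S2))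
      = (1 + m) * K x Set.univ + (1 + m) * S2 := by
    calc R⁻¹ * ((1 + m) * (R * K x Set.univ + R * S2))
        = (R⁻¹ * R) * ((1 + m) * K x Set.univ) + (R⁻¹ * R) * ((1 + m) * S2) := by ring
      _ = (1 + m) * K x Set.univ + (1 + m) * S2 := by rw [hRR, one_mul, one_mul]
  rw [smul_eq_mul, h2, h3, add_comm]
end

section
/- Under m·f(R)=1, the measure ν(A)=(m/(1+m))∫K^{(R)}(y,A)γ(dy) is a left eigenmeasure of M at eigenvalue ρ=1/R: for every A∈𝓔, ∫M(y,A)ν(dy) = ρ·ν(A). -/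
open MeasureTheory ENNReal

theorem stmt_15 {E : Type*} [MeasurableSpace E] (K : E → Measure E) (γ : Measure E)
    [IsProbabilityMeasure γ] (hsub : ∀ x, K x Set.univ ≤ 1)
    (m : ℝ≥0∞) (hm0 : 0 < m) (hmtop : m ≠ ⊤)
    (Mpow Kpow : ℕ → E → Measure E)
    (hM0 : ∀ x, Mpow 0 x = Measure.dirac x)
    (hK0 : ∀ x, Kpow 0 x = Measure.dirac x)
    (hMmeas : ∀ n (A : Set E), MeasurableSet A → Measurable fun x => Mpow n x A)
    (hKmeas : ∀ n (A : Set E), MeasurableSet A → Measurable fun x => Kpow n x A)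
    (hMrec : ∀ (n : ℕ) (x : E) (A : Set E), MeasurableSet A →
        Mpow (n + 1) x A = ∫⁻ y, Mpow n y A ∂(K x + (m * K x Set.univ) • γ))
    (hKrec : ∀ (n : ℕ) (x : E) (A : Set E), MeasurableSet A →
        Kpow (n + 1) x A = ∫⁻ y, Kpow n y A ∂(K x))
    (f : ℝ≥0∞ → ℝ≥0∞)
    (hf : ∀ s, f s = ∑' n : ℕ, s ^ (n + 1) * ∫⁻ x, Kpow (n + 1) x Set.univ ∂γ)
    (Ms Ks : ℝ≥0∞ → E → Set E → ℝ≥0∞)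
    (hMs : ∀ s x A, Ms s x A = ∑' n : ℕ, s ^ n * Mpow n x A)
    (hKs : ∀ s x A, Ks s x A = ∑' n : ℕ, s ^ n * Kpow n x A)
    (R : ℝ≥0∞) (hR0 : 0 < R) (hRtop : R ≠ ⊤) (hRf : m * f R = 1)
    (ν : Set E → ℝ≥0∞)
    (hν : ∀ A : Set E, ν A = (m / (1 + m)) * ∫⁻ y, Ks R y A ∂γ) :
    ∀ A : Set E, MeasurableSet A →
      (m / (1 + m)) * ∫⁻ z,
          (∫⁻ y, ((K y A) + m * K y Set.univ * γ A)
            ∂(Measure.sum fun n : ℕ => R ^ n • Kpow n z)) ∂γ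
        = R⁻¹ * ν A := by
  intro A hA
  -- measurability of the Kpow family
  have hKm : ∀ n : ℕ, Measurable (Kpow n) := fun n =>
    Measure.measurable_of_measurable_coe _ (fun s hs => hKmeas n s hs)
  -- Kpow 1 = K
  have hK1 : ∀ (x : E) (s : Set E), MeasurableSet s → Kpow 1 x s = K x s := by
    intro x s hs
    rw [hKrec 0 x s hs]
    simp_rw [hK0, Measure.dirac_apply' _ hs]
    rw [lintegral_indicator hs]
    simp
  -- measurability of y ↦ K y s
  have hKA : ∀ (s : Set E), MeasurableSet s → Measurable fun y => K y s := by
    intro s hs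
    have h : (fun y => Kpow 1 y s) = fun y => K y s := funext fun y => hK1 y s hs
    rw [← h]; exact hKmeas 1 s hs
  -- Kpow (n+1) x as a bind
  have hbind : ∀ (n : ℕ) (x : E), Kpow (n + 1) x = (K x).bind (Kpow n) := by
    intro n x
    refine Measure.ext fun s hs => ?_
    rw [Measure.bind_apply hs (hKm n).aemeasurable]
    exact hKrec n x s hs
  -- Chapman–Kolmogorov in the other order
  have h2 : ∀ (n : ℕ) (x : E) (s : Set E), MeasurableSet s →
      ∫⁻ y, K y s ∂(Kpow n x) = Kpow (n + 1) x s := by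
    intro n
    induction n with
    | zero =>
      intro x s hs
      rw [hK0, lintegral_dirac' x (hKA s hs), hK1 x s hs]
    | succ n ih =>
      intro x s hs
      rw [hbind n x, Measure.lintegral_bind (hKm n).aemeasurable (hKA s hs).aemeasurable]
      calc ∫⁻ a, ∫⁻ y, K y s ∂(Kpow n a) ∂(K x)
          = ∫⁻ a, Kpow (n + 1) a s ∂(K x) := by
            refine lintegral_congr fun a => ih a s hs
        _ = Kpow (n + 2) x s := (hKrec (n + 1) x s hs).symm
  -- the inner integral
  have hinner : ∀ z : E,
      (∫⁻ y, ((K y A) + m * K y Set.univ * γ A)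
        ∂(Measure.sum fun n : ℕ => R ^ n • Kpow n z))
      = ∑' n : ℕ, R ^ n * (Kpow (n + 1) z A + m * γ A * Kpow (n + 1) z Set.univ) := by
    intro z
    rw [lintegral_sum_measure]
    refine tsum_congr fun n => ?_
    rw [lintegral_smul_measure]
    congr 1
    have : (fun y => K y A + m * K y Set.univ * γ A)
        = fun y => K y A + (m * γ A) * K y Set.univ := by
      funext y; ring
    rw [this, lintegral_add_left (hKA A hA), lintegral_const_mul _ (hKA Set.univ .univ),
      h2 n z A hA, h2 n z Set.univ .univ]
  -- swap integral and sum in LHS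
  have houter : (∫⁻ z, ∑' n : ℕ,
        R ^ n * (Kpow (n + 1) z A + m * γ A * Kpow (n + 1) z Set.univ) ∂γ)
      = ∑' n : ℕ, R ^ n * ((∫⁻ z, Kpow (n + 1) z A ∂γ)
          + m * γ A * ∫⁻ z, Kpow (n + 1) z Set.univ ∂γ) := by
    rw [lintegral_tsum]
    · refine tsum_congr fun n => ?_
      rw [lintegral_const_mul (f := fun z => Kpow (n + 1) z A + m * γ A * Kpow (n + 1) z Set.univ) _ ((hKmeas (n+1) A hA).add
          ((hKmeas (n+1) Set.univ .univ).const_mul _)),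
        lintegral_add_left (hKmeas (n+1) A hA),
        lintegral_const_mul _ (hKmeas (n+1) Set.univ .univ)]
    · intro n
      exact (((hKmeas (n+1) A hA).add
        ((hKmeas (n+1) Set.univ .univ).const_mul _)).const_mul _).aemeasurable
  -- the γ A extracted term equals R⁻¹ * γ A
  have hterm2 : (∑' n : ℕ, R ^ n * (m * γ A * ∫⁻ z, Kpow (n + 1) z Set.univ ∂γ))
      = R⁻¹ * γ A := by
    have hRR : ∀ n : ℕ, (R : ℝ≥0∞) ^ n = R⁻¹ * R ^ (n + 1) := by
      intro n
      rw [pow_succ, ← mul_assoc, mul_comm R⁻¹ (R ^ n), mul_assoc,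
        ENNReal.inv_mul_cancel hR0.ne' hRtop, mul_one]
    calc (∑' n : ℕ, R ^ n * (m * γ A * ∫⁻ z, Kpow (n + 1) z Set.univ ∂γ))
        = (R⁻¹ * γ A) * ∑' n : ℕ, m * (R ^ (n + 1) * ∫⁻ z, Kpow (n + 1) z Set.univ ∂γ) := by
          rw [← ENNReal.tsum_mul_left]
          refine tsum_congr fun n => ?_
          rw [hRR n]; ring
      _ = (R⁻¹ * γ A) * (m * f R) := by
          rw [hf R, ENNReal.tsum_mul_left]
      _ = R⁻¹ * γ A := by rw [hRf, mul_one]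
  -- compute ν A
  have hν' : ν A = (m / (1 + m)) *
      (γ A + ∑' n : ℕ, R ^ (n + 1) * ∫⁻ z, Kpow (n + 1) z A ∂γ) := by
    rw [hν A]
    congr 1
    simp_rw [hKs R _ A]
    rw [lintegral_tsum (fun n => ((hKmeas n A hA).const_mul _).aemeasurable)]
    rw [tsum_eq_zero_add' ENNReal.summable]
    congr 1
    · simp_rw [pow_zero, one_mul, hK0, Measure.dirac_apply' _ hA]
      rw [lintegral_indicator hA]
      simp
    · refine tsum_congr fun n => ?_
      rw [lintegral_const_mul _ (hKmeas (n+1) A hA)]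
  -- put things together
  simp_rw [hinner]
  rw [houter, hν', ← mul_assoc, mul_comm R⁻¹ (m / (1 + m)), mul_assoc]
  congr 1
  have hRR : ∀ n : ℕ, R⁻¹ * R ^ (n + 1) = (R : ℝ≥0∞) ^ n := by
    intro n
    rw [pow_succ, ← mul_assoc, mul_comm R⁻¹ (R ^ n), mul_assoc,
      ENNReal.inv_mul_cancel hR0.ne' hRtop, mul_one]
  rw [mul_add, ENNReal.tsum_mul_left.symm]
  calc (∑' n : ℕ, R ^ n * ((∫⁻ z, Kpow (n + 1) z A ∂γ)
          + m * γ A * ∫⁻ z, Kpow (n + 1) z Set.univ ∂γ))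
      = (∑' n : ℕ, R ^ n * ∫⁻ z, Kpow (n + 1) z A ∂γ)
        + ∑' n : ℕ, R ^ n * (m * γ A * ∫⁻ z, Kpow (n + 1) z Set.univ ∂γ) := by
        rw [← ENNReal.tsum_add]
        exact tsum_congr fun n => mul_add _ _ _
    _ = (∑' n : ℕ, R ^ n * ∫⁻ z, Kpow (n + 1) z A ∂γ) + R⁻¹ * γ A := by rw [hterm2]
    _ = R⁻¹ * γ A + ∑' n : ℕ, R⁻¹ * (R ^ (n + 1) * ∫⁻ z, Kpow (n + 1) z A ∂γ) := by
        rw [add_comm]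
        congr 1
        exact tsum_congr fun n => by rw [← mul_assoc, hRR n]
end
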